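/- Let H be a norming graph with n vertices and m edges that is connected. Then the map a ↦ W_{n/m, a} is a linear isometric embedding of ℓ^m into the normed space (W_H, ‖·‖_H); in particular ‖a‖_m^m = t(H, W_{n/m,a}) for all a ∈ ℓ^m. -/

import Mathlib

/-!
On `Ω_i × Ω_i` the kernel `W_{γ,a}` is the constant `2^{iγ} a_i`, and it vanishes off these
diagonal blocks. As `H` is connected, a map `V → Ω` contributes to `t(H, W_{γ,a})` only if it
sends all of `V` into a single block `Ω_i`; this has probability `2^{-in}` and then contributes
`(2^{iγ} a_i)^m`. For `γ = n/m` the two factors cancel, so `t(H, W_{n/m,a}) = ∑ a_i^m`. Finally a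
connected norming graph has an even number of edges, which turns this into `∑ |a_i|^m`.
-/

open MeasureTheory

noncomputable def sym2Val {V Ω : Type*} (W : Ω → Ω → ℝ) (x : V → Ω) : Sym2 V → ℝ :=
  Sym2.lift ⟨fun i j => (W (x i) (x j) + W (x j) (x i)) / 2, fun i j => by simp [add_comm]⟩

/-- Homomorphism density `t(G, W)` of a graph `G` in a symmetric kernel `W`. -/
noncomputable def homDensity {V : Type} [Fintype V] {Ω : Type*} [MeasurableSpace Ω]
    (G : SimpleGraph V) (μ : Measure Ω) (W : Ω → Ω → ℝ) : ℝ :=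
  ∫ x : V → Ω, ∏ᶠ e ∈ G.edgeSet, sym2Val W x e ∂(Measure.pi fun _ => μ)

/-- Decorated homomorphism density `t(G, w)` for a decoration `w` of the edges. -/
noncomputable def decDensity {V : Type} [Fintype V] {Ω : Type*} [MeasurableSpace Ω]
    (G : SimpleGraph V) (μ : Measure Ω) (w : Sym2 V → Ω → Ω → ℝ) : ℝ :=
  ∫ x : V → Ω, ∏ᶠ e ∈ G.edgeSet, sym2Val (w e) x e ∂(Measure.pi fun _ => μ)

/-- Bounded symmetric measurable kernel. -/
def GoodKernel {Ω : Type*} [MeasurableSpace Ω] (W : Ω → Ω → ℝ) : Prop :=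
  Measurable (Function.uncurry W) ∧ (∀ x y, W x y = W y x) ∧ ∃ C, ∀ x y, |W x y| ≤ C

/-- Hatami's Hölder-type characterisation of weakly norming graphs. -/
def WeaklyNorming {V : Type} [Fintype V] (G : SimpleGraph V) : Prop :=
  ∀ (Ω : Type) (_ : MeasurableSpace Ω) (μ : Measure Ω), IsProbabilityMeasure μ →
    ∀ w : Sym2 V → Ω → Ω → ℝ, (∀ e, GoodKernel (w e)) → (∀ e x y, 0 ≤ w e x y) →
      decDensity G μ w ^ G.edgeSet.ncard ≤ ∏ᶠ e ∈ G.edgeSet, homDensity G μ (w e)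

/-- Hatami's Hölder-type characterisation of seminorming graphs. -/
def Seminorming {V : Type} [Fintype V] (G : SimpleGraph V) : Prop :=
  ∀ (Ω : Type) (_ : MeasurableSpace Ω) (μ : Measure Ω), IsProbabilityMeasure μ →
    ∀ w : Sym2 V → Ω → Ω → ℝ, (∀ e, GoodKernel (w e)) →
      decDensity G μ w ^ G.edgeSet.ncard ≤ ∏ᶠ e ∈ G.edgeSet, |homDensity G μ (w e)|

/-- Norming: seminorming and `‖·‖_H` vanishes only on a.e.-zero kernels. -/
def Norming {V : Type} [Fintype V] (G : SimpleGraph V) : Prop :=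
  Seminorming G ∧
    ∀ (Ω : Type) (_ : MeasurableSpace Ω) (μ : Measure Ω), IsProbabilityMeasure μ →
      ∀ W : Ω → Ω → ℝ, GoodKernel W → homDensity G μ W = 0 →
        ∀ᵐ p ∂(μ.prod μ), W p.1 p.2 = 0


open Set Function

theorem SimpleGraph.Reachable.of_forall_adj_imp {V : Type*} {G : SimpleGraph V} {p : V → Prop}
    (hp : ∀ u v, G.Adj u v → p u → p v) {u v : V} (huv : G.Reachable u v) (hu : p u) : p v := by
  obtain ⟨w⟩ := huv
  induction w with
  | nil => exact hu
  | cons h _ ih => exact ih (hp _ _ h hu)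

variable {Ω ι : Type*} {A : ι → Set Ω}

theorem SimpleGraph.Connected.exists_forall_mem_of_adj {V : Type*} {H : SimpleGraph V}
    (hconn : H.Connected) (hdisj : Pairwise (Disjoint on A)) (hcover : ⋃ i, A i = univ)
    {x : V → Ω} (hx : ∀ u v, H.Adj u v → ∃ i, x u ∈ A i ∧ x v ∈ A i) :
    ∃ i, ∀ v, x v ∈ A i := by
  obtain ⟨v₀⟩ := hconn.nonempty
  obtain ⟨i, hi⟩ := mem_iUnion.1 (hcover ▸ mem_univ (x v₀))
  refine ⟨i, fun v => (hconn v₀ v).of_forall_adj_imp (p := fun v => x v ∈ A i)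
    (fun u w huw hu => ?_) hi⟩
  obtain ⟨j, hju, hjw⟩ := hx u w huw
  rwa [hdisj.eq (not_disjoint_iff.2 ⟨_, hu, hju⟩)]

theorem measureReal_univ_pi_const [MeasurableSpace Ω] {V : Type*} [Fintype V] (μ : Measure Ω)
    [SigmaFinite μ] (s : Set Ω) :
    (Measure.pi fun _ : V => μ).real (univ.pi fun _ => s) = μ.real s ^ Fintype.card V := by
  simp [measureReal_def, Measure.pi_pi]

theorem integral_tsum_indicator_const {α : Type*} [MeasurableSpace α] [Countable ι]
    {μ : Measure α} [IsFiniteMeasure μ] {s : ι → Set α} (hs : ∀ i, MeasurableSet (s i))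
    {c : ι → ℝ} (hc : Summable fun i => |c i| * μ.real (s i)) :
    ∫ x, ∑' i, (s i).indicator (fun _ => c i) x ∂μ = ∑' i, c i * μ.real (s i) := by
  have hint : ∀ i (d : ℝ), ∫ x, (s i).indicator (fun _ => d) x ∂μ = d * μ.real (s i) :=
    fun i d => by rw [integral_indicator_const _ (hs i), smul_eq_mul, mul_comm]
  rw [← integral_tsum_of_summable_integral_norm fun i => (integrable_const (c i)).indicator (hs i)]
  · simp only [hint]
  · simpa only [norm_indicator_eq_indicator_norm, Real.norm_eq_abs, hint] using hc

structure IsBlockKernel (A : ι → Set Ω) (b : ι → ℝ) (W : Ω → Ω → ℝ) : Prop where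
  apply_of_mem : ∀ i x y, x ∈ A i → y ∈ A i → W x y = b i
  apply_eq_zero : ∀ x y, (¬ ∃ i, x ∈ A i ∧ y ∈ A i) → W x y = 0

namespace IsBlockKernel

variable {b : ι → ℝ} {W : Ω → Ω → ℝ} {V : Type} {H : SimpleGraph V}

theorem symm (hW : IsBlockKernel A b W) (x y : Ω) : W x y = W y x := by
  by_cases h : ∃ i, x ∈ A i ∧ y ∈ A i
  · obtain ⟨i, hx, hy⟩ := h
    rw [hW.apply_of_mem i x y hx hy, hW.apply_of_mem i y x hy hx]
  · rw [hW.apply_eq_zero x y h, hW.apply_eq_zero y x fun ⟨i, hy, hx⟩ => h ⟨i, hx, hy⟩]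

theorem sym2Val_mk (hW : IsBlockKernel A b W) (x : V → Ω) (u v : V) :
    sym2Val W x s(u, v) = W (x u) (x v) := by
  simp only [sym2Val, Sym2.lift_mk]
  rw [hW.symm (x v) (x u), add_self_div_two]

theorem sym2Val_eq_of_forall_mem (hW : IsBlockKernel A b W) {x : V → Ω} {i : ι}
    (hx : ∀ v, x v ∈ A i) (e : Sym2 V) : sym2Val W x e = b i := by
  induction e using Sym2.ind with
  | _ u v => rw [hW.sym2Val_mk, hW.apply_of_mem i _ _ (hx u) (hx v)]

theorem finprod_edgeSet_sym2Val [Finite V] (hW : IsBlockKernel A b W)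
    (hdisj : Pairwise (Disjoint on A)) (hcover : ⋃ i, A i = univ) (hconn : H.Connected)
    (x : V → Ω) :
    ∏ᶠ e ∈ H.edgeSet, sym2Val W x e
      = ∑' i, (univ.pi fun _ : V => A i).indicator (fun _ => b i ^ H.edgeSet.ncard) x := by
  rw [finprod_mem_eq_finite_toFinset_prod _ H.edgeSet.toFinite]
  by_cases h : ∃ i, ∀ v, x v ∈ A i
  · obtain ⟨i, hi⟩ := h
    obtain ⟨v₀⟩ := hconn.nonempty
    rw [Finset.prod_congr rfl fun e _ => hW.sym2Val_eq_of_forall_mem hi e, Finset.prod_const,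
      ← ncard_eq_toFinset_card _, tsum_eq_single i, indicator_of_mem (mem_univ_pi.2 hi)]
    intro j hj
    exact indicator_of_notMem
      (fun hxj => hj (hdisj.eq (not_disjoint_iff.2 ⟨_, mem_univ_pi.1 hxj v₀, hi v₀⟩))) _
  · have hx : ∀ i, x ∉ univ.pi fun _ : V => A i := fun i hx => h ⟨i, mem_univ_pi.1 hx⟩
    simp only [indicator_of_notMem (hx _), tsum_zero]
    obtain ⟨u, v, huv, hne⟩ : ∃ u v, H.Adj u v ∧ ¬ ∃ i, x u ∈ A i ∧ x v ∈ A i := by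
      by_contra! h'
      exact h (hconn.exists_forall_mem_of_adj hdisj hcover h')
    exact Finset.prod_eq_zero (H.edgeSet.toFinite.mem_toFinset.2 huv)
      (by rw [hW.sym2Val_mk, hW.apply_eq_zero _ _ hne])

theorem homDensity_eq [Fintype V] [MeasurableSpace Ω] [Countable ι] {μ : Measure Ω}
    [IsFiniteMeasure μ] (hW : IsBlockKernel A b W) (hmeas : ∀ i, MeasurableSet (A i))
    (hdisj : Pairwise (Disjoint on A)) (hcover : ⋃ i, A i = univ) (hconn : H.Connected)
    (hsum : Summable fun i => |b i| ^ H.edgeSet.ncard * μ.real (A i) ^ Fintype.card V) :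
    homDensity H μ W = ∑' i, b i ^ H.edgeSet.ncard * μ.real (A i) ^ Fintype.card V := by
  unfold homDensity
  simp_rw [hW.finprod_edgeSet_sym2Val hdisj hcover hconn]
  rw [integral_tsum_indicator_const fun i => MeasurableSet.univ_pi fun _ => hmeas i] <;>
    simp only [measureReal_univ_pi_const, abs_pow, hsum]

end IsBlockKernel

theorem Norming.even_ncard_edgeSet {V : Type} [Fintype V] {H : SimpleGraph V} (hH : Norming H)
    (hconn : H.Connected) : Even H.edgeSet.ncard := by
  by_contra hodd
  rw [Nat.not_even_iff_odd] at hodd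
  let μ : Measure Bool := (PMF.uniformOfFintype Bool).toMeasure
  have hμ : ∀ i, μ {i} = 2⁻¹ := fun i => by simp [μ, PMF.uniformOfFintype_apply]
  -- `W = ±1` on the two diagonal atoms, so for odd `m` its density is `(1 + (-1)^m) / 2^n = 0`.
  let b : Bool → ℝ := fun i => if i then 1 else -1
  let W : Bool → Bool → ℝ := fun x y => if x = y then b x else 0
  have hW : IsBlockKernel (fun i => {i}) b W :=
    ⟨by rintro i x y rfl rfl; simp [W], fun x y h => if_neg fun hxy => h ⟨x, rfl, hxy.symm⟩⟩
  have hdens : homDensity H μ W = 0 := by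
    rw [hW.homDensity_eq (fun _ => measurableSet_singleton _)
      (fun i j hij => disjoint_singleton.2 hij) (by ext; simp) hconn (.of_finite), tsum_fintype]
    simp [measureReal_def, hμ, b, hodd.neg_one_pow]
  have hgood : GoodKernel W :=
    ⟨measurable_of_countable _, hW.symm, 1, by intro x y; cases x <;> cases y <;> simp [W, b]⟩
  have hW0 := ae_iff_of_countable.1 (hH.2 Bool _ μ inferInstance W hgood hdens) (true, true)
    (by simp [← singleton_prod_singleton, Measure.prod_prod, hμ])
  simp [W, b] at hW0

theorem two_rpow_mul_div_pow_mul_half_pow (k n : ℕ) {m : ℕ} (hm : m ≠ 0) :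
    ((2 : ℝ) ^ (((k : ℝ) + 1) * ((n : ℝ) / m))) ^ m * ((1 / 2 : ℝ) ^ (k + 1)) ^ n = 1 := by
  have hexp : ((k : ℝ) + 1) * ((n : ℝ) / m) * m = ((k + 1) * n : ℕ) := by
    push_cast
    field_simp
  rw [← Real.rpow_mul_natCast (by norm_num), hexp, Real.rpow_natCast, ← pow_mul, ← mul_pow,
    mul_one_div_cancel two_ne_zero, one_pow]

/-- Hatami's embedding of `ℓ^m` into `(W_H, ‖·‖_H)` for a connected norming graph `H`
with `n` vertices and `m` edges: with `Ω` partitioned into blocks `A i` of measure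
`2^{-(i+1)}` and `Φ a` the kernel `W_{n/m, a}` (equal to `2^{(i+1)·n/m} · a i` on
`A i × A i` and `0` elsewhere), the map `a ↦ Φ a` is linear and satisfies
`t(H, Φ a) = ∑ i, |a i| ^ m = ‖a‖_m ^ m` for all `a ∈ ℓ^m`; hence it is a linear
isometric embedding of `ℓ^m` into `(W_H, ‖·‖_H)`. -/
theorem ellp_embeds_isometrically {Ω : Type} [MeasurableSpace Ω] (μ : Measure Ω)
    [IsProbabilityMeasure μ]
    (A : ℕ → Set Ω) (hmeas : ∀ i, MeasurableSet (A i))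
    (hdisj : Pairwise (Function.onFun Disjoint A))
    (hcover : (⋃ i, A i) = Set.univ)
    (hμ : ∀ i, μ (A i) = ENNReal.ofReal ((1 / 2 : ℝ) ^ (i + 1)))
    {V : Type} [Fintype V] (H : SimpleGraph V) (hconn : H.Connected)
    (hnorming : Norming H)
    (n m : ℕ) (hn : n = Fintype.card V) (hm : m = H.edgeSet.ncard) (hm1 : 1 ≤ m)
    (Φ : (ℕ → ℝ) → Ω → Ω → ℝ)
    (hΦval : ∀ a i x y, x ∈ A i → y ∈ A i →
      Φ a x y = 2 ^ (((i : ℝ) + 1) * ((n : ℝ) / m)) * a i)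
    (hΦzero : ∀ a x y, (¬ ∃ i, x ∈ A i ∧ y ∈ A i) → Φ a x y = 0) :
    (∀ (a b : ℕ → ℝ) (c : ℝ),
        Φ (fun i => a i + c * b i) = fun x y => Φ a x y + c * Φ b x y) ∧
    (∀ a : ℕ → ℝ, Summable (fun i => |a i| ^ m) →
        homDensity H μ (Φ a) = ∑' i, |a i| ^ m ∧
        |homDensity H μ (Φ a)| ^ ((1 : ℝ) / m) = (∑' i, |a i| ^ m) ^ ((1 : ℝ) / m)) := by
  have hm0 : m ≠ 0 := by omega
  have hblock : ∀ a, IsBlockKernel A (fun i => 2 ^ (((i : ℝ) + 1) * ((n : ℝ) / m)) * a i) (Φ a) :=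
    fun a => ⟨hΦval a, hΦzero a⟩
  have hweight : ∀ (i : ℕ) (t : ℝ),
      (2 ^ (((i : ℝ) + 1) * ((n : ℝ) / m)) * t) ^ m * μ.real (A i) ^ n = t ^ m := fun i t => by
    rw [measureReal_def, hμ, ENNReal.toReal_ofReal (by positivity), mul_pow, mul_right_comm,
      two_rpow_mul_div_pow_mul_half_pow i n hm0, one_mul]
  refine ⟨fun a b c => funext₂ fun x y => ?_, fun a ha => ?_⟩
  · by_cases h : ∃ i, x ∈ A i ∧ y ∈ A i
    · obtain ⟨i, hx, hy⟩ := h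
      simp only [hΦval _ i x y hx hy]
      ring
    · simp only [hΦzero _ x y h, mul_zero, add_zero]
  have hdens : homDensity H μ (Φ a) = ∑' i, |a i| ^ m := by
    subst hn hm
    rw [(hblock a).homDensity_eq hmeas hdisj hcover hconn]
    · simp only [hweight, (hnorming.even_ncard_edgeSet hconn).pow_abs]
    · simpa only [abs_mul, abs_of_pos (Real.rpow_pos_of_pos two_pos _), hweight] using ha
  exact ⟨hdens, by rw [hdens, abs_of_nonneg (tsum_nonneg fun i => by positivity)]⟩
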